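/- arXiv:2405.15686 — 2 statements merged into one kernel-verified Lean document; each statement's English description precedes it below -/
import Mathlib

section
/- For the logistic function σ(x) = 1/(1+e^{-x}) and every natural number n ≥ 0, the n-th derivative is given by σ^(n)(x) = ∑_{k=1}^{n+1} (-1)^{k+1} (k-1)! · S(n+1, k) · σ(x)^k, where S denotes the Stirling numbers of the second kind. -/
/-- The logistic function. -/
noncomputable def logistic (x : ℝ) : ℝ := 1 / (1 + Real.exp (-x))

/-- Stirling numbers of the second kind. -/
def stirling2 : ℕ → ℕ → ℕ
  | 0, 0 => 1
  | 0, _ + 1 => 0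
  | _ + 1, 0 => 0
  | m + 1, n + 1 => (n + 1) * stirling2 m (n + 1) + stirling2 m n

/-!
Since `σ' = σ - σ²`, every derivative of `σ` is a polynomial in `σ`: `σ⁽ⁿ⁾ = Pₙ(σ)` with `P₀ = X`
and `Pₙ₊₁ = Pₙ' · (X - X²)`. On coefficients this reads `c(n+1, k+1) = (k+1) c(n, k+1) - k c(n, k)`,
which after the normalisation `c(n, k) = (-1)^(k+1) (k-1)! S(n+1, k)` is the Stirling recurrence
`S(m+1, k+1) = (k+1) S(m, k+1) + S(m, k)`.
-/

open Polynomial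

theorem stirling2_eq_stirlingSecond : stirling2 = Nat.stirlingSecond := by
  funext m k
  induction m generalizing k with
  | zero => cases k <;> rfl
  | succ m ih =>
    cases k with
    | zero => rfl
    | succ k => rw [stirling2, Nat.stirlingSecond_succ_succ, ih, ih]

theorem logistic_eq_sigmoid : logistic = Real.sigmoid :=
  funext fun _ => one_div _

section SigmoidPoly

variable (R : Type*) [CommRing R]

noncomputable def sigmoidPoly : ℕ → R[X]
  | 0 => X
  | n + 1 => derivative (sigmoidPoly n) * (X - X ^ 2)

theorem coeff_sigmoidPoly (n k : ℕ) :
    (sigmoidPoly R n).coeff k =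
      (-1) ^ (k + 1) * ((k - 1).factorial : R) * (Nat.stirlingSecond (n + 1) k : R) := by
  induction n generalizing k with
  | zero =>
    rcases k with _ | _ | k
    · simp [sigmoidPoly]
    · simp [sigmoidPoly, Nat.stirlingSecond_self]
    · simp [sigmoidPoly, coeff_X, Nat.stirlingSecond_eq_zero_of_lt]
  | succ n ih =>
    have hrec : sigmoidPoly R (n + 1) = derivative (sigmoidPoly R n) * X
        - derivative (sigmoidPoly R n) * X * X := by
      rw [sigmoidPoly]; ring
    rcases k with _ | _ | k
    · simp [hrec]
    · simp [hrec, coeff_derivative, ih, Nat.stirlingSecond_succ_succ]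
    · simp only [hrec, coeff_sub, coeff_mul_X, coeff_derivative, ih, Nat.stirlingSecond_succ_succ,
        Nat.add_sub_cancel, Nat.factorial_succ]
      push_cast
      ring

theorem natDegree_sigmoidPoly_le (n : ℕ) : (sigmoidPoly R n).natDegree ≤ n + 1 :=
  natDegree_le_iff_coeff_eq_zero.2 fun k hk => by
    rw [coeff_sigmoidPoly, Nat.stirlingSecond_eq_zero_of_lt hk, Nat.cast_zero, mul_zero]

end SigmoidPoly

theorem hasDerivAt_eval_sigmoid (p : ℝ[X]) (x : ℝ) :
    HasDerivAt (fun x => p.eval (Real.sigmoid x))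
      ((derivative p * (X - X ^ 2)).eval (Real.sigmoid x)) x := by
  refine ((p.hasDerivAt _).comp x (Real.hasDerivAt_sigmoid x)).congr_deriv ?_
  simp only [eval_mul, eval_sub, eval_X, eval_pow]
  ring

theorem iteratedDeriv_sigmoid (n : ℕ) :
    iteratedDeriv n Real.sigmoid = fun x => (sigmoidPoly ℝ n).eval (Real.sigmoid x) := by
  induction n with
  | zero => simp [sigmoidPoly]
  | succ n ih =>
    rw [iteratedDeriv_succ, ih]
    exact funext fun x => (hasDerivAt_eval_sigmoid _ x).deriv

theorem stmt_5 (n : ℕ) (x : ℝ) :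
    iteratedDeriv n logistic x =
      ∑ k ∈ Finset.Icc 1 (n + 1),
        (-1 : ℝ) ^ (k + 1) * ((k - 1).factorial : ℝ) * (stirling2 (n + 1) k : ℝ)
          * (logistic x) ^ k := by
  simp only [logistic_eq_sigmoid, iteratedDeriv_sigmoid, stirling2_eq_stirlingSecond]
  rw [eval_eq_sum_range' (Nat.lt_succ_of_le (natDegree_sigmoidPoly_le ℝ n)),
    Finset.range_eq_Ico, Finset.sum_eq_sum_Ico_succ_bot (Nat.succ_pos _), Nat.succ_eq_add_one,
    Finset.Ico_add_one_right_eq_Icc]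
  simp [coeff_sigmoidPoly]
end

section
/- For every natural number n ≥ 1, the n-th derivative of the logistic function σ tends to 0 as x → +∞ and as x → -∞. -/
/-! If `f' = q ∘ f` for a polynomial `q`, the chain rule gives `f⁽ⁿ⁾ = pₙ ∘ f` with `p₀ = X` and
`pₙ₊₁ = pₙ' * q`. Every `pₙ` with `n ≥ 1` is a multiple of `q`, so `f⁽ⁿ⁾ → 0` wherever `f` tends to
a root of `q`. The logistic function solves `σ' = σ - σ²`, whose roots `0` and `1` are the limits of
`σ` at `-∞` and `+∞`. -/

open Filter Polynomial

section AutonomousODE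

variable {𝕜 : Type*} [NontriviallyNormedField 𝕜]

noncomputable def iteratedDerivPoly (q : 𝕜[X]) : ℕ → 𝕜[X]
  | 0 => X
  | n + 1 => derivative (iteratedDerivPoly q n) * q

lemma dvd_iteratedDerivPoly_succ (q : 𝕜[X]) (n : ℕ) : q ∣ iteratedDerivPoly q (n + 1) :=
  dvd_mul_left _ _

lemma iteratedDeriv_eq_eval_iteratedDerivPoly {f : 𝕜 → 𝕜} {q : 𝕜[X]}
    (hf : ∀ x, HasDerivAt f (q.eval (f x)) x) (n : ℕ) :
    iteratedDeriv n f = fun x => (iteratedDerivPoly q n).eval (f x) := by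
  induction n with
  | zero => simp [iteratedDerivPoly]
  | succ n ih =>
    funext x
    rw [iteratedDeriv_succ, ih, iteratedDerivPoly, eval_mul]
    exact (((iteratedDerivPoly q n).hasDerivAt (f x)).comp x (hf x)).deriv

lemma tendsto_iteratedDeriv_of_isRoot {f : 𝕜 → 𝕜} {q : 𝕜[X]}
    (hf : ∀ x, HasDerivAt f (q.eval (f x)) x) {l : Filter 𝕜} {a : 𝕜}
    (hfa : Tendsto f l (nhds a)) (ha : q.IsRoot a) {n : ℕ} (hn : 1 ≤ n) :
    Tendsto (iteratedDeriv n f) l (nhds 0) := by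
  obtain ⟨m, rfl⟩ := Nat.exists_eq_add_of_le' hn
  have hroot : (iteratedDerivPoly q (m + 1)).eval a = 0 :=
    eval_eq_zero_of_dvd_of_eval_eq_zero (dvd_iteratedDerivPoly_succ q m) ha
  rw [iteratedDeriv_eq_eval_iteratedDerivPoly hf, ← hroot]
  exact ((iteratedDerivPoly q (m + 1)).continuous.tendsto a).comp hfa

end AutonomousODE

lemma logistic_eq_inv : logistic = (fun x => 1 + Real.exp (-x))⁻¹ := by
  funext x; simp [logistic, one_div]

lemma hasDerivAt_logistic (x : ℝ) :
    HasDerivAt logistic ((X - X ^ 2 : ℝ[X]).eval (logistic x)) x := by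
  have hpos : (0 : ℝ) < 1 + Real.exp (-x) := by positivity
  have hden : HasDerivAt (fun y => 1 + Real.exp (-y)) (-Real.exp (-x)) x := by
    simpa using ((Real.hasDerivAt_exp (-x)).comp x (hasDerivAt_neg x)).const_add 1
  have hinv := hden.inv hpos.ne'
  rw [← logistic_eq_inv] at hinv
  refine hinv.congr_deriv ?_
  simp only [logistic, eval_sub, eval_pow, eval_X]
  field_simp
  ring

lemma tendsto_logistic_atTop : Tendsto logistic atTop (nhds 1) := by
  have hden : Tendsto (fun x => 1 + Real.exp (-x)) atTop (nhds (1 + 0)) :=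
    tendsto_const_nhds.add (Real.tendsto_exp_atBot.comp tendsto_neg_atTop_atBot)
  simpa [logistic_eq_inv, Pi.inv_def] using hden.inv₀ (by norm_num)

lemma tendsto_logistic_atBot : Tendsto logistic atBot (nhds 0) := by
  have hden : Tendsto (fun x => 1 + Real.exp (-x)) atBot atTop :=
    tendsto_atTop_add_const_left _ _ (Real.tendsto_exp_atTop.comp tendsto_neg_atBot_atTop)
  rw [logistic_eq_inv]
  exact hden.inv_tendsto_atTop

theorem stmt_13 (n : ℕ) (hn : 1 ≤ n) :
    Tendsto (iteratedDeriv n logistic) atTop (nhds 0) ∧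
    Tendsto (iteratedDeriv n logistic) atBot (nhds 0) :=
  ⟨tendsto_iteratedDeriv_of_isRoot hasDerivAt_logistic tendsto_logistic_atTop (by simp) hn,
    tendsto_iteratedDeriv_of_isRoot hasDerivAt_logistic tendsto_logistic_atBot (by simp) hn⟩
end
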